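/- arXiv:0808.1532 — 2 statements merged into one kernel-verified Lean document; each statement's English description precedes it below -/
import Mathlib

section
/- Security subspace for the (3,5) CQ protocol, players {1,2,3}: let h be the graph on four qubits labelled (D,1,2,3) with edges {D,1}, {D,2}, {D,3}, {1,2}, {2,3}, with stabilizers k_i (no square vertices). Let W := span{|h_{(0,0,0,0)}⟩, |h_{(1,1,0,0)}⟩, |h_{(1,0,0,1)}⟩, |h_{(0,1,0,1)}⟩} (labels ordered (ℓ_D,ℓ_1,ℓ_2,ℓ_3)). Then (i) W = {ψ ∈ H_4 : k_2 ψ = ψ and (k_D∘k_1∘k_2∘k_3) ψ = ψ}; and (ii) for every finite-dimensional complex inner-product space H_E and every unit vector Ψ ∈ H_E ⊗ H_4 lying in the subspace H_E ⊗ W, the reduced state of Ψ on H_E and qubit D is product with the dealer maximally mixed: Tr_{{1,2,3}}(|Ψ⟩⟨Ψ|) = ρ_E ⊗ (Id_2/2), where ρ_E := Tr_{{D,1,2,3}}(|Ψ⟩⟨Ψ|). Consequently the mutual information between the environment E and the dealer's qubit is zero. -/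
noncomputable section

open scoped ComplexConjugate

/-- The Hilbert space of qubits indexed by `V`, as functions from bit strings to `ℂ`. -/
abbrev QState (V : Type) : Type := (V → Fin 2) → ℂ

/-- The diagonal operator with diagonal entries `d`. -/
def diagOp {V : Type} (d : (V → Fin 2) → ℂ) : QState V →ₗ[ℂ] QState V where
  toFun f := fun x => d x * f x
  map_add' f g := by funext x; simp [mul_add]
  map_smul' c f := by funext x; simp [smul_eq_mul]; ring

/-- The Pauli `Z` operator on qubit `i`. -/
def Zop {V : Type} (i : V) : QState V →ₗ[ℂ] QState V :=
  diagOp fun x => (-1 : ℂ) ^ (x i : ℕ)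

/-- The Pauli `X` operator on qubit `i` (bit flip). -/
def Xop {V : Type} [DecidableEq V] (i : V) : QState V →ₗ[ℂ] QState V where
  toFun f := fun x => f (Function.update x i (x i + 1))
  map_add' f g := rfl
  map_smul' c f := rfl

/-- The phase gate `S` on qubit `i`, sending `|x⟩` to `(-i)^(x i) |x⟩`. -/
def Sop {V : Type} (i : V) : QState V →ₗ[ℂ] QState V :=
  diagOp fun x => (-Complex.I) ^ (x i : ℕ)

/-- The Pauli `Y` operator on qubit `i`, `Y = i·X·Z`. -/
def Yop {V : Type} [DecidableEq V] (i : V) : QState V →ₗ[ℂ] QState V :=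
  Complex.I • (Xop i ∘ₗ Zop i)

/-- `qVal G x` is the number of edges of `G` both of whose endpoints carry bit 1 in `x`. -/
def qVal {V : Type} (G : SimpleGraph V) (x : V → Fin 2) : ℕ :=
  Nat.card {e : Sym2 V // e ∈ G.edgeSet ∧ ∀ v ∈ e, x v = 1}

/-- The graph state `|G⟩`, with amplitudes `2^{-n/2} (-1)^{q_G(x)}`. -/
def graphState {V : Type} [Fintype V] (G : SimpleGraph V) : QState V :=
  fun x => (((Real.sqrt 2)⁻¹ ^ Fintype.card V : ℝ) : ℂ) * (-1 : ℂ) ^ qVal G x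

/-- The labeled/encoded graph state `|𝒢_ℓ⟩ = (∏_i Z_i^{ℓ_i}) (∏_{j ∈ Vsq} S_j) |G⟩`,
with square-vertex set `Vsq`. -/
def encSq {V : Type} [Fintype V] (G : SimpleGraph V) (Vsq : Set V) (ℓ : V → Fin 2) : QState V :=
  fun x => (-1 : ℂ) ^ Nat.card {i : V // ℓ i = 1 ∧ x i = 1}
    * (-Complex.I) ^ Nat.card {j : V // j ∈ Vsq ∧ x j = 1}
    * graphState G x

/-- The encoded graph state `|G_ℓ⟩` (no square vertices). -/
def encG {V : Type} [Fintype V] (G : SimpleGraph V) (ℓ : V → Fin 2) : QState V :=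
  encSq G ∅ ℓ

open Classical in
/-- The stabilizer operator of vertex `i`: `X_i ∏_{j ∈ N_i} Z_j` for circular vertices,
`Y_i ∏_{j ∈ N_i} Z_j` for square vertices (`i ∈ Vsq`). -/
def Kop {V : Type} [DecidableEq V] (G : SimpleGraph V) (Vsq : Set V) (i : V) :
    QState V →ₗ[ℂ] QState V :=
  (if i ∈ Vsq then Yop i else Xop i) ∘ₗ
    diagOp fun x => (-1 : ℂ) ^ Nat.card {j : V // G.Adj i j ∧ x j = 1}

/-- Merge a bit string on `P` with a bit string on the complement of `P`. -/
def mergeBits {V : Type} [DecidableEq V] (P : Finset V) (a : {i // i ∈ P} → Fin 2)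
    (c : {i // i ∉ P} → Fin 2) : V → Fin 2 :=
  fun i => if h : i ∈ P then a ⟨i, h⟩ else c ⟨i, h⟩

/-- The reduced density matrix of the pure state `ψ` on the qubits in `P`:
`(a, b) ↦ ∑_c ⟨a⊔c|ψ⟩⟨ψ|b⊔c⟩`. -/
def red {V : Type} [Fintype V] [DecidableEq V] (P : Finset V) (ψ : QState V) :
    ({i // i ∈ P} → Fin 2) → ({i // i ∈ P} → Fin 2) → ℂ :=
  fun a b => ∑ c : {i // i ∉ P} → Fin 2, ψ (mergeBits P a c) * conj (ψ (mergeBits P b c))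

/-- The computational basis vector `|y⟩`. -/
def basisVec {V : Type} [Fintype V] [DecidableEq V] (y : V → Fin 2) : QState V :=
  fun x => if x = y then 1 else 0

/-- The matrix entry `⟨x|A|y⟩` of an operator. -/
def opEntry {V : Type} [Fintype V] [DecidableEq V] (A : QState V →ₗ[ℂ] QState V)
    (x y : V → Fin 2) : ℂ := A (basisVec y) x

/-- `A` acts trivially outside `P`: it equals `M ⊗ Id` for some operator `M` on the
qubits in `P`. -/
def trivialOutside {V : Type} [Fintype V] [DecidableEq V] (P : Finset V)
    (A : QState V →ₗ[ℂ] QState V) : Prop :=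
  ∃ M : ({i // i ∈ P} → Fin 2) → ({i // i ∈ P} → Fin 2) → ℂ,
    ∀ a b c c', opEntry A (mergeBits P a c) (mergeBits P b c') = if c = c' then M a b else 0

/-- The product `∏_{i ∈ T} K_i` of (commuting) operators, taken in sorted order. -/
def prodOps {V : Type} [LinearOrder V] (T : Finset V)
    (K : V → QState V →ₗ[ℂ] QState V) : QState V →ₗ[ℂ] QState V :=
  (T.sort (· ≤ ·)).foldr (fun i acc => K i ∘ₗ acc) LinearMap.id


/-- The rank-one operator `|u⟩⟨v|` (conjugate-linear in `v`). -/
def outer {E : Type} [NormedAddCommGroup E] [InnerProductSpace ℂ E] (u v : E) : E →ₗ[ℂ] E where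
  toFun w := (inner ℂ v w : ℂ) • u
  map_add' w w' := by simp [inner_add_right, add_smul]
  map_smul' c w := by simp [inner_smul_right, smul_smul]

/-- The graph on the four qubits (D,1,2,3) = (0,1,2,3) with edges
{D,1}, {D,2}, {D,3}, {1,2}, {2,3}. -/
def hGraph123 : SimpleGraph (Fin 4) :=
  SimpleGraph.fromRel fun a b =>
    (a = 0 ∧ (b = 1 ∨ b = 2 ∨ b = 3)) ∨ (a = 1 ∧ b = 2) ∨ (a = 2 ∧ b = 3)

/-- The security subspace `W`, spanned by the four encoded graph states with labels
(0,0,0,0), (1,1,0,0), (1,0,0,1), (0,1,0,1) in the order (ℓ_D, ℓ_1, ℓ_2, ℓ_3). -/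
def W123 : Submodule ℂ (QState (Fin 4)) :=
  Submodule.span ℂ
    {encG hGraph123 ![0, 0, 0, 0], encG hGraph123 ![1, 1, 0, 0],
     encG hGraph123 ![1, 0, 0, 1], encG hGraph123 ![0, 1, 0, 1]}

/-!
The encoded graph states `|G_ℓ⟩ = Z^ℓ |G⟩` are the Walsh characters `x ↦ (-1)^(ℓ·x)` times the
nowhere vanishing amplitude of `|G⟩`, so they form a basis of `H_n`. Flipping bit `i` changes the
number of edges inside the support of `x` by the number of neighbours of `i` in it, which makes
`|G_ℓ⟩` an eigenvector of `K_i` with eigenvalue `(-1)^(ℓ_i)`. Hence the common `+1`-eigenspace of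
`k₂` and `k_D k₁ k₂ k₃` is spanned by the `|h_ℓ⟩` with `ℓ₂ = 0` and `ℓ` of even weight: these are
the four labels of `W`.

Both stabilizers act on amplitudes as signed bit flips, so they act in the same way on the
`H_E`-valued amplitudes of `Ψ ∈ H_E ⊗ W`. Flipping qubit 2 keeps the dealer bit but, 2 being
adjacent to `D`, contributes the sign `(-1)^(x_D)`: this makes each off-diagonal dealer block of
the reduced state its own negative. Flipping all qubits swaps the two dealer values and makes the
diagonal blocks equal, so each is half of `ρ_E`.
-/

lemma fin_two_eq_zero_or_one (a : Fin 2) : a = 0 ∨ a = 1 := by omega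

lemma neg_one_pow_mul_self {R : Type*} [Monoid R] [HasDistribNeg R] (n : ℕ) :
    (-1 : R) ^ n * (-1) ^ n = 1 := by
  rw [← pow_add, ← two_mul, pow_mul, neg_one_sq, one_pow]

lemma neg_one_pow_card_subtype {R V : Type*} [CommMonoid R] [HasDistribNeg R] [Fintype V]
    (P : V → Prop) [DecidablePred P] :
    (-1 : R) ^ Nat.card {i // P i} = ∏ i, if P i then -1 else 1 := by
  rw [Nat.card_eq_fintype_card, Fintype.card_subtype, Finset.prod_ite, Finset.prod_const,
    Finset.prod_const_one, mul_one]

lemma Module.Basis.apply_eq_self_iff {ι R M : Type*} [CommRing R] [IsDomain R] [AddCommGroup M]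
    [Module R M] (b : Module.Basis ι R M) {A : M →ₗ[R] M} {μ : ι → R}
    (hA : ∀ i, A (b i) = μ i • b i) (v : M) :
    A v = v ↔ ∀ i, b.repr v i ≠ 0 → μ i = 1 := by
  have hrepr : ∀ i, b.repr (A v) i = μ i * b.repr v i := fun i => by
    have : b.coord i ∘ₗ A = μ i • b.coord i :=
      b.ext fun j => by
        rcases eq_or_ne i j with rfl | h
        · simp [hA]
        · simp [hA, h]
    exact LinearMap.congr_fun this v
  rw [← b.repr.injective.eq_iff, Finsupp.ext_iff]
  simp only [hrepr, mul_left_eq_self₀]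
  exact forall_congr' fun i => or_iff_not_imp_right

section GraphState

variable {V : Type} (G : SimpleGraph V)

def walshChar [Fintype V] (ℓ : V → Fin 2) : AddChar (V → Fin 2) ℂ where
  toFun x := (-1) ^ Nat.card {i // ℓ i = 1 ∧ x i = 1}
  map_zero_eq_one' := by simp
  map_add_eq_mul' x y := by
    simp only [neg_one_pow_card_subtype, ← Finset.prod_mul_distrib, Pi.add_apply]
    refine Finset.prod_congr rfl fun i _ => ?_
    rcases fin_two_eq_zero_or_one (ℓ i) with h | h <;>
      rcases fin_two_eq_zero_or_one (x i) with h' | h' <;>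
      rcases fin_two_eq_zero_or_one (y i) with h'' | h'' <;> simp [h, h', h'']

lemma encG_apply [Fintype V] (ℓ x : V → Fin 2) :
    encG G ℓ x = walshChar ℓ x * graphState G x := by
  simp [encG, encSq, walshChar]

lemma graphState_ne_zero [Fintype V] (x : V → Fin 2) : graphState G x ≠ 0 := by
  simp [graphState]

variable [DecidableEq V]

lemma update_add_one_eq_add_single (x : V → Fin 2) (i : V) :
    Function.update x i (x i + 1) = x + Pi.single i 1 := by
  funext j
  by_cases h : j = i
  · subst h; simp
  · simp [h]

lemma card_adj_update (x : V → Fin 2) (i : V) (b : Fin 2) :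
    Nat.card {j // G.Adj i j ∧ Function.update x i b j = 1} =
      Nat.card {j // G.Adj i j ∧ x j = 1} :=
  Nat.card_congr <| Equiv.subtypeEquivRight fun _ =>
    and_congr_right fun h => by rw [Function.update_of_ne h.ne']

lemma Kop_apply (i : V) (ψ : QState V) (x : V → Fin 2) :
    Kop G ∅ i ψ x = (-1) ^ Nat.card {j // G.Adj i j ∧ x j = 1} * ψ (x + Pi.single i 1) := by
  simp only [Kop, Set.mem_empty_iff_false, if_false, LinearMap.comp_apply, Xop, diagOp,
    LinearMap.coe_mk, AddHom.coe_mk]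
  rw [card_adj_update, update_add_one_eq_add_single]

lemma qVal_update_one [Finite V] (x : V → Fin 2) (i : V) :
    qVal G (Function.update x i 1) =
      qVal G (Function.update x i 0) + Nat.card {j // G.Adj i j ∧ x j = 1} := by
  have hsplit : {e : Sym2 V | e ∈ G.edgeSet ∧ ∀ v ∈ e, Function.update x i 1 v = 1} =
      {e | e ∈ G.edgeSet ∧ ∀ v ∈ e, Function.update x i 0 v = 1} ∪
        Sym2.mkEmbedding i '' {j | G.Adj i j ∧ x j = 1} := by
    ext e
    induction e using Sym2.ind with
    | _ u v =>
      simp only [Set.mem_ofPred_eq, Set.mem_union, Set.mem_image, SimpleGraph.mem_edgeSet,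
        Sym2.mem_iff, forall_eq_or_imp, forall_eq, Sym2.mkEmbedding_apply, Sym2.eq_iff]
      grind [G.adj_symm, G.ne_of_adj, Function.update_apply]
  have hdisj : Disjoint {e : Sym2 V | e ∈ G.edgeSet ∧ ∀ v ∈ e, Function.update x i 0 v = 1}
      (Sym2.mkEmbedding i '' {j | G.Adj i j ∧ x j = 1}) := by
    rw [Set.disjoint_right]
    rintro _ ⟨j, -, rfl⟩ ⟨-, h⟩
    simpa using h i (Sym2.mem_mk_left i j)
  change Set.ncard {e : Sym2 V | e ∈ G.edgeSet ∧ ∀ v ∈ e, Function.update x i 1 v = 1} =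
    Set.ncard {e : Sym2 V | e ∈ G.edgeSet ∧ ∀ v ∈ e, Function.update x i 0 v = 1} +
      Set.ncard {j | G.Adj i j ∧ x j = 1}
  rw [hsplit, Set.ncard_union_eq hdisj,
    Set.ncard_image_of_injective _ (Sym2.mkEmbedding i).injective]

lemma neg_one_pow_qVal_add_single [Finite V] (x : V → Fin 2) (i : V) :
    (-1 : ℂ) ^ qVal G (x + Pi.single i 1) =
      (-1) ^ Nat.card {j // G.Adj i j ∧ x j = 1} * (-1) ^ qVal G x := by
  have hq := qVal_update_one G x i
  rw [← update_add_one_eq_add_single]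
  rcases fin_two_eq_zero_or_one (x i) with h | h
  · conv_rhs => arg 2; rw [← Function.update_eq_self i x, h]
    rw [h, zero_add, hq, pow_add]
    ring
  · conv_rhs => arg 2; rw [← Function.update_eq_self i x, h]
    rw [h, show (1 : Fin 2) + 1 = 0 from rfl, hq, pow_add]
    linear_combination -(-1 : ℂ) ^ qVal G (Function.update x i 0) *
      neg_one_pow_mul_self (R := ℂ) (Nat.card {j // G.Adj i j ∧ x j = 1})

lemma graphState_add_single [Fintype V] (x : V → Fin 2) (i : V) :
    graphState G (x + Pi.single i 1) =
      (-1) ^ Nat.card {j // G.Adj i j ∧ x j = 1} * graphState G x := by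
  simp only [graphState, neg_one_pow_qVal_add_single]
  ring

lemma walshChar_single [Fintype V] (ℓ : V → Fin 2) (i : V) :
    walshChar ℓ (Pi.single i 1) = (-1) ^ (ℓ i : ℕ) := by
  change (-1 : ℂ) ^ Nat.card _ = _
  rw [neg_one_pow_card_subtype, Fintype.prod_eq_single i fun j hj => by simp [hj]]
  rcases fin_two_eq_zero_or_one (ℓ i) with h | h <;> simp [h]

lemma walshChar_injective [Fintype V] : Function.Injective (walshChar (V := V)) := by
  intro ℓ m h
  funext i
  have := congrArg (fun χ => χ (Pi.single i 1)) h
  simp only [walshChar_single] at this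
  revert this
  rcases fin_two_eq_zero_or_one (ℓ i) with h | h <;>
    rcases fin_two_eq_zero_or_one (m i) with h' | h' <;> norm_num [h, h']

lemma Kop_encG [Fintype V] (i : V) (ℓ : V → Fin 2) :
    Kop G ∅ i (encG G ℓ) = (-1 : ℂ) ^ (ℓ i : ℕ) • encG G ℓ := by
  funext x
  simp only [Pi.smul_apply, smul_eq_mul]
  rw [Kop_apply, encG_apply, encG_apply, AddChar.map_add_eq_mul, walshChar_single,
    graphState_add_single]
  linear_combination (-1 : ℂ) ^ (ℓ i : ℕ) * walshChar ℓ x * graphState G x *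
    neg_one_pow_mul_self (R := ℂ) (Nat.card {j // G.Adj i j ∧ x j = 1})

lemma linearIndependent_encG [Fintype V] : LinearIndependent ℂ (encG G) := by
  have hchar : LinearIndependent ℂ fun ℓ : V → Fin 2 => ⇑(walshChar ℓ) :=
    (AddChar.linearIndependent _ ℂ).comp _ walshChar_injective
  have hdiag : LinearMap.ker (diagOp (graphState G)) = ⊥ :=
    LinearMap.ker_eq_bot'.2 fun f hf => funext fun x => by
      simpa [diagOp, graphState_ne_zero] using congrFun hf x
  have hcomp : encG G = diagOp (graphState G) ∘ fun ℓ => ⇑(walshChar ℓ) := by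
    funext ℓ x
    simp [diagOp, encG_apply, mul_comm]
  rw [hcomp]
  exact hchar.map' _ hdiag

def encGBasis [Fintype V] : Module.Basis (V → Fin 2) ℂ (QState V) :=
  basisOfLinearIndependentOfCardEqFinrank (linearIndependent_encG G) (by simp)

@[simp]
lemma coe_encGBasis [Fintype V] : ⇑(encGBasis G) = encG G :=
  coe_basisOfLinearIndependentOfCardEqFinrank _ _

end GraphState

section SignedShift

variable {V : Type}

def IsSignedShift (A : QState V →ₗ[ℂ] QState V) (v : V → Fin 2) : Prop :=
  ∃ n : (V → Fin 2) → ℕ, ∀ ψ x, A ψ x = (-1) ^ n x * ψ (x + v)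

lemma isSignedShift_Kop [DecidableEq V] (G : SimpleGraph V) (i : V) :
    IsSignedShift (Kop G ∅ i) (Pi.single i 1) :=
  ⟨_, Kop_apply G i⟩

lemma IsSignedShift.comp {A B : QState V →ₗ[ℂ] QState V} {v w : V → Fin 2}
    (hA : IsSignedShift A v) (hB : IsSignedShift B w) : IsSignedShift (A ∘ₗ B) (v + w) := by
  obtain ⟨n, hn⟩ := hA
  obtain ⟨m, hm⟩ := hB
  refine ⟨fun x => n x + m (x + v), fun ψ x => ?_⟩
  rw [LinearMap.comp_apply, hn, hm, pow_add, add_assoc, mul_assoc]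

lemma apply_add_eq_smul_of_forall_dual {E : Type} [AddCommGroup E] [Module ℂ E]
    {A : QState V →ₗ[ℂ] QState V} {v : V → Fin 2} {n : (V → Fin 2) → ℕ}
    (hA : ∀ ψ x, A ψ x = (-1) ^ n x * ψ (x + v)) {Ψ : (V → Fin 2) → E}
    (hΨ : ∀ φ : E →ₗ[ℂ] ℂ, A (fun x => φ (Ψ x)) = fun x => φ (Ψ x)) (x : V → Fin 2) :
    Ψ (x + v) = (-1 : ℂ) ^ n x • Ψ x := by
  rw [← sub_eq_zero, ← Module.forall_dual_apply_eq_zero_iff ℂ]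
  intro φ
  have h := congrFun (hΨ φ) x
  rw [hA] at h
  rw [map_sub, map_smul, smul_eq_mul]
  linear_combination (-1 : ℂ) ^ n x * h - φ (Ψ (x + v)) * neg_one_pow_mul_self (R := ℂ) (n x)

end SignedShift

section ReducedState

variable {E : Type} [NormedAddCommGroup E] [InnerProductSpace ℂ E]

lemma outer_smul_smul (a b : ℂ) (u v : E) :
    outer (a • u) (b • v) = (a * conj b) • outer u v := by
  ext w
  simp only [outer, LinearMap.coe_mk, AddHom.coe_mk, inner_smul_left, smul_smul,
    LinearMap.smul_apply]
  ring_nf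

variable {C : Type} [Fintype C] (Φ : Fin 2 → C → E)

lemma sum_outer_eq_zero_of_sign_flip (σ : C ≃ C) (m : C → ℕ)
    (hσ : ∀ d c, Φ d (σ c) = (-1 : ℂ) ^ ((d : ℕ) + m c) • Φ d c) {d d' : Fin 2} (hd : d ≠ d') :
    ∑ c, outer (Φ d c) (Φ d' c) = 0 := by
  have hneg : ∑ c, outer (Φ d c) (Φ d' c) = -∑ c, outer (Φ d c) (Φ d' c) := by
    conv_lhs => rw [← σ.sum_comp]
    rw [← Finset.sum_neg_distrib]
    refine Finset.sum_congr rfl fun c _ => ?_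
    rw [hσ, hσ, outer_smul_smul, map_pow, map_neg, map_one, ← pow_add,
      show (d : ℕ) + m c + (d' + m c) = 1 + 2 * m c by omega, pow_add, pow_mul]
    simp
  have h2 : (2 : ℂ) • ∑ c, outer (Φ d c) (Φ d' c) = 0 := by
    rw [two_smul]
    nth_rewrite 2 [hneg]
    exact add_neg_cancel _
  exact (smul_eq_zero.1 h2).resolve_left two_ne_zero

lemma sum_outer_one_eq_sum_outer_zero (τ : C ≃ C) (n : C → ℕ)
    (hτ : ∀ c, Φ 1 (τ c) = (-1 : ℂ) ^ n c • Φ 0 c) :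
    ∑ c, outer (Φ 1 c) (Φ 1 c) = ∑ c, outer (Φ 0 c) (Φ 0 c) := by
  rw [← τ.sum_comp]
  refine Finset.sum_congr rfl fun c _ => ?_
  rw [hτ, outer_smul_smul, map_pow, map_neg, map_one, neg_one_pow_mul_self, one_smul]

theorem sum_outer_eq_ite_half_smul (σ : C ≃ C) (m : C → ℕ)
    (hσ : ∀ d c, Φ d (σ c) = (-1 : ℂ) ^ ((d : ℕ) + m c) • Φ d c)
    (τ : C ≃ C) (n : C → ℕ) (hτ : ∀ c, Φ 1 (τ c) = (-1 : ℂ) ^ n c • Φ 0 c) (d d' : Fin 2) :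
    ∑ c, outer (Φ d c) (Φ d' c) =
      (if d = d' then (1 / 2 : ℂ) else 0) • ∑ e, ∑ c, outer (Φ e c) (Φ e c) := by
  rcases eq_or_ne d d' with rfl | hd
  · have h10 := sum_outer_one_eq_sum_outer_zero Φ τ n hτ
    rw [if_pos rfl, Fin.sum_univ_two, h10, ← two_smul ℂ, smul_smul]
    rcases fin_two_eq_zero_or_one d with rfl | rfl <;> norm_num [h10]
  · rw [if_neg hd, zero_smul, sum_outer_eq_zero_of_sign_flip Φ σ m hσ hd]

end ReducedState

section JoinAt

variable {V β : Type} [DecidableEq V]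

def joinAt (D : V) (d : β) (c : {k // k ≠ D} → β) : V → β :=
  fun k => if h : k = D then d else c ⟨k, h⟩

lemma funSplitAt_symm_apply_eq_joinAt (D : V) (p : β × ({k // k ≠ D} → β)) :
    (Equiv.funSplitAt D β).symm p = joinAt D p.1 p.2 := by
  funext k
  by_cases h : k = D
  · subst h; simp [joinAt]
  · simp [joinAt, h]

lemma sum_eq_sum_sum_joinAt [Fintype V] [Fintype β] {M : Type} [AddCommMonoid M] (D : V)
    (f : (V → β) → M) : ∑ x, f x = ∑ d, ∑ c, f (joinAt D d c) := by
  rw [← (Equiv.funSplitAt D β).symm.sum_comp, Fintype.sum_prod_type]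
  simp only [funSplitAt_symm_apply_eq_joinAt]

lemma joinAt_add_single [AddMonoid β] (D : V) (d : β) (c : {k // k ≠ D} → β) {i : V}
    (hi : i ≠ D) (b : β) : joinAt D d c + Pi.single i b = joinAt D d (c + Pi.single ⟨i, hi⟩ b) := by
  funext k
  by_cases h : k = D
  · subst h; simp [joinAt, hi.symm]
  · by_cases hk : k = i
    · subst hk; simp [joinAt, h]
    · simp [joinAt, h, hk]

lemma joinAt_add_one [Add β] [One β] (D : V) (d : β) (c : {k // k ≠ D} → β) :
    joinAt D d c + 1 = joinAt D (d + 1) (c + 1) := by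
  funext k
  by_cases h : k = D <;> simp [joinAt, h]

end JoinAt

instance : DecidableRel hGraph123.Adj := fun a b =>
  decidable_of_iff _ (SimpleGraph.fromRel_adj _ a b).symm

lemma Kop_prod_encG (ℓ : Fin 4 → Fin 2) :
    (Kop hGraph123 ∅ 0 ∘ₗ Kop hGraph123 ∅ 1 ∘ₗ Kop hGraph123 ∅ 2 ∘ₗ Kop hGraph123 ∅ 3)
      (encG hGraph123 ℓ) = (-1 : ℂ) ^ ((ℓ 0 : ℕ) + ℓ 1 + ℓ 2 + ℓ 3) • encG hGraph123 ℓ := by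
  simp only [LinearMap.comp_apply, Kop_encG, map_smul, smul_smul, ← pow_add]
  ring_nf

lemma W123_eq_span_encGBasis : W123 = Submodule.span ℂ (encGBasis hGraph123 ''
    {ℓ | (-1 : ℂ) ^ (ℓ 2 : ℕ) = 1 ∧ (-1 : ℂ) ^ ((ℓ 0 : ℕ) + ℓ 1 + ℓ 2 + ℓ 3) = 1}) := by
  have hlabels : {ℓ : Fin 4 → Fin 2 | (-1 : ℂ) ^ (ℓ 2 : ℕ) = 1 ∧
      (-1 : ℂ) ^ ((ℓ 0 : ℕ) + ℓ 1 + ℓ 2 + ℓ 3) = 1} =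
      {![0, 0, 0, 0], ![1, 1, 0, 0], ![1, 0, 0, 1], ![0, 1, 0, 1]} := by
    ext ℓ
    simp only [Set.mem_ofPred_eq, neg_one_pow_eq_one_iff_even (by norm_num : (-1 : ℂ) ≠ 1),
      Set.mem_insert_iff, Set.mem_singleton_iff]
    revert ℓ
    decide
  rw [hlabels, coe_encGBasis]
  simp only [Set.image_insert_eq, Set.image_singleton, W123]

theorem mem_W123_iff (ψ : QState (Fin 4)) : ψ ∈ W123 ↔
    (Kop hGraph123 ∅ 2 ψ = ψ ∧
      (Kop hGraph123 ∅ 0 ∘ₗ Kop hGraph123 ∅ 1 ∘ₗ Kop hGraph123 ∅ 2 ∘ₗ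
        Kop hGraph123 ∅ 3) ψ = ψ) := by
  rw [W123_eq_span_encGBasis, Module.Basis.mem_span_image,
    (encGBasis hGraph123).apply_eq_self_iff (μ := fun ℓ => (-1 : ℂ) ^ (ℓ 2 : ℕ))
      (by simpa using Kop_encG hGraph123 2),
    (encGBasis hGraph123).apply_eq_self_iff
      (μ := fun ℓ => (-1 : ℂ) ^ ((ℓ 0 : ℕ) + ℓ 1 + ℓ 2 + ℓ 3)) (by simpa using Kop_prod_encG),
    ← forall_and]
  simp only [Set.subset_def, Finset.mem_coe, Finsupp.mem_support_iff, Set.mem_ofPred_eq,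
    imp_and]

lemma card_adj_two_joinAt (d : Fin 2) (c : {k : Fin 4 // k ≠ 0} → Fin 2) :
    Nat.card {j // hGraph123.Adj 2 j ∧ joinAt 0 d c j = 1} =
      (d : ℕ) + (c ⟨1, by decide⟩ + c ⟨3, by decide⟩ : ℕ) := by
  rw [Nat.card_eq_fintype_card]
  revert d c
  decide

lemma isSignedShift_Kop_prod :
    IsSignedShift (Kop hGraph123 ∅ 0 ∘ₗ Kop hGraph123 ∅ 1 ∘ₗ Kop hGraph123 ∅ 2 ∘ₗ
      Kop hGraph123 ∅ 3) 1 := by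
  have h := (isSignedShift_Kop hGraph123 0).comp ((isSignedShift_Kop hGraph123 1).comp
    ((isSignedShift_Kop hGraph123 2).comp (isSignedShift_Kop hGraph123 3)))
  rwa [show (Pi.single 0 1 + (Pi.single 1 1 + (Pi.single 2 1 + Pi.single 3 1)) :
    Fin 4 → Fin 2) = 1 by decide] at h

-- `Ψ ∈ H_E ⊗ W` is encoded by its `H_E`-valued amplitudes, every functional image of which lies
-- in `W`; the reduced state on `E` and `D` appears through its dealer blocks `d, d'`.
/-- security subspace for the (3,5) CQ protocol, players {1,2,3}:
(i) `W` is exactly the common `+1`-eigenspace of `k₂` and `k_D∘k₁∘k₂∘k₃`;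
(ii) every unit vector `Ψ ∈ H_E ⊗ W` (represented by its `E`-valued components on the
four-qubit computational basis; membership in `H_E ⊗ W` is expressed by composing with
arbitrary functionals on `E`) has reduced state on `E` and the dealer qubit of product
form `ρ_E ⊗ (Id₂/2)`, stated blockwise in the dealer indices; hence the mutual
information between the environment and the dealer is zero. -/
theorem security_subspace_35_players123 :
    (∀ ψ : QState (Fin 4), ψ ∈ W123 ↔
      (Kop hGraph123 ∅ 2 ψ = ψ ∧
        (Kop hGraph123 ∅ 0 ∘ₗ Kop hGraph123 ∅ 1 ∘ₗ Kop hGraph123 ∅ 2 ∘ₗ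
          Kop hGraph123 ∅ 3) ψ = ψ)) ∧
    (∀ (E : Type) [NormedAddCommGroup E] [InnerProductSpace ℂ E]
        [FiniteDimensional ℂ E] (Ψ : (Fin 4 → Fin 2) → E),
      (∀ φ : E →ₗ[ℂ] ℂ, (fun x => φ (Ψ x)) ∈ W123) →
      (∑ x : Fin 4 → Fin 2, ‖Ψ x‖ ^ 2) = 1 →
      ∀ d d' : Fin 2,
        (∑ c : {i : Fin 4 // i ≠ 0} → Fin 2,
            outer (Ψ fun k => if h : k = 0 then d else c ⟨k, h⟩)
                  (Ψ fun k => if h : k = 0 then d' else c ⟨k, h⟩)) =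
          (if d = d' then (1 / 2 : ℂ) else 0) •
            ∑ x : Fin 4 → Fin 2, outer (Ψ x) (Ψ x)) := by
  refine ⟨mem_W123_iff, fun E _ _ _ Ψ hW _ d d' => ?_⟩
  have hfix := fun φ : E →ₗ[ℂ] ℂ => (mem_W123_iff _).1 (hW φ)
  have hZ := apply_add_eq_smul_of_forall_dual (Kop_apply hGraph123 2) fun φ => (hfix φ).1
  obtain ⟨n, hn⟩ := isSignedShift_Kop_prod
  have hX := apply_add_eq_smul_of_forall_dual hn fun φ => (hfix φ).2
  rw [sum_eq_sum_sum_joinAt (0 : Fin 4) fun x => outer (Ψ x) (Ψ x)]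
  refine sum_outer_eq_ite_half_smul (fun d c => Ψ (joinAt 0 d c))
    (Equiv.addRight (Pi.single ⟨2, by decide⟩ 1)) (fun c => c ⟨1, by decide⟩ + c ⟨3, by decide⟩)
    (fun d c => ?_) (Equiv.addRight 1) (fun c => n (joinAt 0 0 c)) (fun c => ?_) d d'
  · rw [Equiv.coe_addRight, ← joinAt_add_single, hZ, card_adj_two_joinAt]
  · have h := hX (joinAt 0 0 c)
    rwa [joinAt_add_one, zero_add] at h

end
end

section
/- Dealer decoupling lemma (core of Proposition 10): let p be any simple graph on m vertices {1,…,m} with encoded graph states |p_ℓ⟩ ∈ H_m, let H_E be a finite-dimensional complex inner-product space with an orthonormal family {|η⟩ : η ∈ {0,1}^{m−1}}, and let α : {0,1}^{m−1} → ℂ satisfy ∑_η |α_η|² = 1. Write (a,η) for the label string on {1,…,m} whose first entry is a and whose remaining entries are η. Then the vector Ψ := 2^{−1/2} ∑_η α_η (|0⟩_D ⊗ |p_{(0,η)}⟩ + |1⟩_D ⊗ |p_{(1,η)}⟩) ⊗ |η⟩_E ∈ H_1 ⊗ H_m ⊗ H_E is a unit vector, and the partial trace of |Ψ⟩⟨Ψ|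 over the m graph qubits equals (Id_2/2) ⊗ ρ_E with ρ_E = ∑_η |α_η|² |η⟩⟨η|; in particular the dealer qubit D is maximally mixed and uncorrelated with E, so the mutual information between E and D is zero. -/
noncomputable section

open scoped ComplexConjugate

/-- The components (indexed by the dealer bit `d` and the graph-qubit basis point `x`)
of the vector `Ψ = 2^{−1/2} ∑_η α_η (|0⟩_D |p_{(0,η)}⟩ + |1⟩_D |p_{(1,η)}⟩) ⊗ |η⟩_E`
of `H_1 ⊗ H_m ⊗ H_E`. -/
def dealerVec {m : ℕ} (p : SimpleGraph (Fin (m + 1))) {E : Type} [NormedAddCommGroup E]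
    [InnerProductSpace ℂ E] (ηv : (Fin m → Fin 2) → E) (α : (Fin m → Fin 2) → ℂ)
    (d : Fin 2) (x : Fin (m + 1) → Fin 2) : E :=
  (((Real.sqrt 2)⁻¹ : ℝ) : ℂ) • ∑ η, (α η * encG p (Fin.cons d η) x) • ηv η

/-!
The encoded graph states `|p_ℓ⟩`, `ℓ ∈ {0,1}^{m+1}`, are orthonormal: the label enters only
through the sign character `x ↦ (-1)^{ℓ·x}`, and distinct characters of `(ℤ/2)^{m+1}` are
orthogonal. Tracing out the graph qubits therefore kills every cross term between labels
`(d, η) ≠ (d', η')`, so the off-diagonal dealer blocks vanish and each diagonal block is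
`½ ∑_η |α_η|² |η⟩⟨η|`; its trace, twice over, gives the norm.
-/

section EncodedGraphState

variable {V : Type} [Fintype V]

lemma neg_one_pow_card_eq_prod (t x : V → Fin 2) :
    (-1 : ℂ) ^ Nat.card {i : V // t i = 1 ∧ x i = 1} =
      ∏ i, if t i = 1 ∧ x i = 1 then -1 else 1 := by
  rw [Nat.card_eq_fintype_card, Fintype.card_subtype, ← Finset.prod_const, Finset.prod_filter]

lemma encG_apply_s14 (G : SimpleGraph V) (ℓ x : V → Fin 2) :
    encG G ℓ x = graphState G x * ∏ i, if ℓ i = 1 ∧ x i = 1 then -1 else 1 := by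
  simp only [encG, encSq, Set.mem_empty_iff_false, false_and, Nat.card_of_isEmpty, pow_zero,
    mul_one, neg_one_pow_card_eq_prod]
  ring

lemma graphState_mul_conj (G : SimpleGraph V) (x : V → Fin 2) :
    graphState G x * conj (graphState G x) = 2⁻¹ ^ Fintype.card V := by
  rw [Complex.mul_conj', graphState, norm_mul, norm_pow, norm_neg, norm_one, one_pow, mul_one,
    Complex.norm_real, Real.norm_of_nonneg (by positivity), ← Complex.ofReal_pow, ← pow_mul,
    mul_comm, pow_mul, inv_pow, Real.sq_sqrt zero_le_two]
  push_cast
  rfl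

lemma sum_sign_mul_sign (l l' : Fin 2) :
    ∑ b : Fin 2, (if l = 1 ∧ b = 1 then (-1 : ℂ) else 1) * (if l' = 1 ∧ b = 1 then -1 else 1) =
      if l = l' then 2 else 0 := by
  fin_cases l <;> fin_cases l' <;> norm_num [Fin.sum_univ_two]

lemma sum_encG_mul_conj [DecidableEq V] (G : SimpleGraph V) (ℓ ℓ' : V → Fin 2) :
    ∑ x, encG G ℓ x * conj (encG G ℓ' x) = if ℓ = ℓ' then 1 else 0 := by
  calc ∑ x, encG G ℓ x * conj (encG G ℓ' x)
      = ∑ x : V → Fin 2, 2⁻¹ ^ Fintype.card V * ∏ i,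
          (if ℓ i = 1 ∧ x i = 1 then (-1 : ℂ) else 1) * (if ℓ' i = 1 ∧ x i = 1 then -1 else 1) := by
        refine Finset.sum_congr rfl fun x _ => ?_
        rw [encG_apply_s14, encG_apply_s14, ← graphState_mul_conj G x, Finset.prod_mul_distrib]
        simp only [map_mul, map_prod, apply_ite conj, map_neg, map_one]
        ring
    _ = 2⁻¹ ^ Fintype.card V * ∏ i, (if ℓ i = ℓ' i then 2 else 0) := by
        simp only [← Finset.mul_sum, ← sum_sign_mul_sign, Fintype.prod_sum]
    _ = if ℓ = ℓ' then 1 else 0 := by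
        by_cases h : ℓ = ℓ'
        · simp [h]
        · obtain ⟨i, hi⟩ := Function.ne_iff.mp h
          rw [Finset.prod_eq_zero (Finset.mem_univ i) (if_neg hi), if_neg h, mul_zero]

lemma sum_norm_encG_sq [DecidableEq V] (G : SimpleGraph V) (ℓ : V → Fin 2) :
    ∑ x, ‖encG G ℓ x‖ ^ 2 = 1 := by
  have h := sum_encG_mul_conj G ℓ ℓ
  rw [if_pos rfl] at h
  simp only [Complex.mul_conj'] at h
  exact_mod_cast h

end EncodedGraphState

section Outer

variable {E : Type} [NormedAddCommGroup E] [InnerProductSpace ℂ E]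

lemma outer_smul_left (a : ℂ) (u v : E) : outer (a • u) v = a • outer u v :=
  LinearMap.ext fun _ => smul_comm _ _ _

lemma outer_smul_right (a : ℂ) (u v : E) : outer u (a • v) = conj a • outer u v :=
  LinearMap.ext fun w => by simp [outer, smul_smul, mul_comm]

lemma outer_sum_left {ι : Type} (s : Finset ι) (f : ι → E) (v : E) :
    outer (∑ i ∈ s, f i) v = ∑ i ∈ s, outer (f i) v :=
  LinearMap.ext fun w => by simp [outer, Finset.smul_sum]

lemma outer_sum_right {ι : Type} (s : Finset ι) (u : E) (g : ι → E) :
    outer u (∑ i ∈ s, g i) = ∑ i ∈ s, outer u (g i) :=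
  LinearMap.ext fun w => by simp [outer, Finset.sum_smul]

variable {X ι : Type} [Fintype X] [Fintype ι]

lemma norm_sum_smul_sq_of_orthonormal {e : ι → E} (he : Orthonormal ℂ e) (a : ι → ℂ) :
    ‖∑ i, a i • e i‖ ^ 2 = ∑ i, ‖a i‖ ^ 2 := by
  have h := he.inner_sum a a Finset.univ
  simp only [Complex.conj_mul', inner_self_eq_norm_sq_to_K] at h
  exact RCLike.ofReal_injective (K := ℂ) (by push_cast; exact h)

lemma sum_norm_sum_smul_sq {e : ι → E} (he : Orthonormal ℂ e) {ψ : ι → X → ℂ}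
    (hψ : ∀ i, ∑ x, ‖ψ i x‖ ^ 2 = 1) (β : ι → ℂ) :
    ∑ x, ‖∑ i, (β i * ψ i x) • e i‖ ^ 2 = ∑ i, ‖β i‖ ^ 2 := by
  simp only [norm_sum_smul_sq_of_orthonormal he, norm_mul, mul_pow]
  rw [Finset.sum_comm]
  simp only [← Finset.mul_sum, hψ, mul_one]

lemma outer_sum_smul_sum_smul (a b : ι → ℂ) (e : ι → E) :
    outer (∑ i, a i • e i) (∑ j, b j • e j) =
      ∑ i, ∑ j, (a i * conj (b j)) • outer (e i) (e j) := by
  rw [outer_sum_left]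
  refine Finset.sum_congr rfl fun i _ => ?_
  rw [outer_sum_right]
  refine Finset.sum_congr rfl fun j _ => ?_
  rw [outer_smul_left, outer_smul_right, smul_smul]

lemma sum_outer_sum_smul [DecidableEq ι] {ψ ψ' : ι → X → ℂ} {c : ℂ}
    (hψ : ∀ i j, ∑ x, ψ i x * conj (ψ' j x) = if i = j then c else 0) (β γ : ι → ℂ)
    (e : ι → E) :
    ∑ x, outer (∑ i, (β i * ψ i x) • e i) (∑ j, (γ j * ψ' j x) • e j) =
      c • ∑ i, (β i * conj (γ i)) • outer (e i) (e i) := by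
  have coeff : ∀ i j, ∑ x, β i * ψ i x * conj (γ j * ψ' j x) =
      if i = j then c * (β i * conj (γ i)) else 0 := by
    intro i j
    calc ∑ x, β i * ψ i x * conj (γ j * ψ' j x)
        = β i * conj (γ j) * ∑ x, ψ i x * conj (ψ' j x) := by
          rw [Finset.mul_sum]
          exact Finset.sum_congr rfl fun x _ => by rw [map_mul]; ring
      _ = _ := by rw [hψ]; split_ifs with h <;> simp [h, mul_comm]
  simp only [outer_sum_smul_sum_smul]
  rw [Finset.sum_comm]
  simp only [Finset.smul_sum, smul_smul]
  refine Finset.sum_congr rfl fun i _ => ?_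
  rw [Finset.sum_comm]
  simp only [← Finset.sum_smul, coeff, ite_smul, zero_smul, Finset.sum_ite_eq, Finset.mem_univ,
    if_true]

end Outer

lemma dealerVec_eq_sum {m : ℕ} (p : SimpleGraph (Fin (m + 1))) {E : Type} [NormedAddCommGroup E]
    [InnerProductSpace ℂ E] (ηv : (Fin m → Fin 2) → E) (α : (Fin m → Fin 2) → ℂ) (d : Fin 2) :
    dealerVec p ηv α d =
      fun x => ∑ η, (((Real.sqrt 2)⁻¹ : ℂ) * α η * encG p (Fin.cons d η) x) • ηv η := by
  ext1 x
  rw [dealerVec, Finset.smul_sum]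
  refine Finset.sum_congr rfl fun η _ => ?_
  rw [smul_smul, mul_assoc]
  push_cast
  rfl

theorem dealer_decoupling_general (m : ℕ) (p : SimpleGraph (Fin (m + 1))) (E : Type)
    [NormedAddCommGroup E] [InnerProductSpace ℂ E]
    (ηv : (Fin m → Fin 2) → E) (hη : Orthonormal ℂ ηv)
    (α : (Fin m → Fin 2) → ℂ) (hα : (∑ η, ‖α η‖ ^ 2) = 1) :
    (∑ d : Fin 2, ∑ x : Fin (m + 1) → Fin 2, ‖dealerVec p ηv α d x‖ ^ 2) = 1 ∧
    (∀ d d' : Fin 2,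
      (∑ x : Fin (m + 1) → Fin 2, outer (dealerVec p ηv α d x) (dealerVec p ηv α d' x)) =
        (if d = d' then (1 / 2 : ℂ) else 0) •
          ∑ η, ((‖α η‖ ^ 2 : ℝ) : ℂ) • outer (ηv η) (ηv η)) := by
  have half : ‖((Real.sqrt 2)⁻¹ : ℂ)‖ ^ 2 = 2⁻¹ := by
    rw [← Complex.ofReal_inv, Complex.norm_real, Real.norm_of_nonneg (by positivity), inv_pow,
      Real.sq_sqrt zero_le_two]
  refine ⟨?_, fun d d' => ?_⟩
  · simp only [dealerVec_eq_sum, sum_norm_sum_smul_sq hη fun η => sum_norm_encG_sq p _, norm_mul,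
      mul_pow, ← Finset.mul_sum, hα, half, Fin.sum_univ_two]
    norm_num
  · have hψ : ∀ η η', ∑ x, encG p (Fin.cons d η) x * conj (encG p (Fin.cons d' η') x) =
        if η = η' then (if d = d' then 1 else 0) else 0 := fun η η' => by
      simp only [sum_encG_mul_conj, Fin.cons_inj]
      split_ifs <;> tauto
    have weight : ∀ η, ((Real.sqrt 2)⁻¹ : ℂ) * α η * conj (((Real.sqrt 2)⁻¹ : ℂ) * α η) =
        2⁻¹ * ((‖α η‖ ^ 2 : ℝ) : ℂ) := fun η => by
      rw [Complex.mul_conj', ← Complex.ofReal_pow, norm_mul, mul_pow, half]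
      push_cast
      rfl
    rw [dealerVec_eq_sum, dealerVec_eq_sum, sum_outer_sum_smul hψ]
    simp only [weight, ← smul_smul, ← Finset.smul_sum]
    split_ifs <;> simp

/-- dealer decoupling lemma: for any graph `p` on `m+1 ≥ 1` vertices,
any orthonormal family `{|η⟩}` in a finite-dimensional inner product space `H_E`, and
amplitudes `α` with `∑ |α_η|² = 1`, the vector `Ψ` above is a unit vector, and the
partial trace of `|Ψ⟩⟨Ψ|` over the graph qubits equals `(Id₂/2) ⊗ ρ_E` with
`ρ_E = ∑ |α_η|² |η⟩⟨η|` (stated blockwise in the dealer indices); in particular the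
dealer qubit is maximally mixed and uncorrelated with `E`. -/
theorem dealer_decoupling (m : ℕ) (p : SimpleGraph (Fin (m + 1))) (E : Type)
    [NormedAddCommGroup E] [InnerProductSpace ℂ E] [FiniteDimensional ℂ E]
    (ηv : (Fin m → Fin 2) → E) (hη : Orthonormal ℂ ηv)
    (α : (Fin m → Fin 2) → ℂ) (hα : (∑ η, ‖α η‖ ^ 2) = 1) :
    (∑ d : Fin 2, ∑ x : Fin (m + 1) → Fin 2, ‖dealerVec p ηv α d x‖ ^ 2) = 1 ∧
    (∀ d d' : Fin 2,
      (∑ x : Fin (m + 1) → Fin 2, outer (dealerVec p ηv α d x) (dealerVec p ηv α d' x)) =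
        (if d = d' then (1 / 2 : ℂ) else 0) •
          ∑ η, ((‖α η‖ ^ 2 : ℝ) : ℂ) • outer (ηv η) (ηv η)) :=
  dealer_decoupling_general m p E ηv hη α hα

end
end
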